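/- arXiv:2305.15757 — 5 statements merged into one kernel-verified Lean document; each statement's English description precedes it below -/
import Mathlib

section
/- Let u_1, …, u_p > 0 be the frequencies of the unsafe clusters and s_1, …, s_q > 0 the frequencies of the safe clusters, with p ≥ 1, q ≥ 1, and suppose the majority assumption holds in the strong (all-pairs) form: u_i < s_j for every i = 1..p and j = 1..q. Let f : ℝ → ℝ be strictly convex on [0,∞) with f(0) = 0 and f(x) > 0 for all x > 0. Then the unsafe mass under the f-warped normalized sampling distribution is strictly smaller than the raw unsafe fraction: (Σ_i f(u_i)) / (Σ_i f(u_i) + Σ_j f(s_j)) < (Σ_i u_i) / (Σ_i u_i + Σ_j s_j). -/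
/-! Strict convexity with `f 0 = 0` makes the slope `f x / x` strictly increasing on `(0, ∞)`,
so the majority assumption gives `f (u i) * s j < u i * f (s j)` for every unsafe–safe pair.
Summing over all pairs yields `(∑ f u) * (∑ s) < (∑ u) * (∑ f s)`, which is the claimed
inequality between the two fractions after cross-multiplication. -/

open Finset

theorem StrictConvexOn.mul_lt_mul_of_lt {f : ℝ → ℝ} (hf : StrictConvexOn ℝ (Set.Ici 0) f)
    (hf0 : f 0 = 0) {a b : ℝ} (ha : 0 < a) (hab : a < b) : f a * b < a * f b := by
  have hb : 0 < b := ha.trans hab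
  have hslope : f a / a < f b / b := by
    simpa [hf0] using hf.secant_strict_mono Set.self_mem_Ici ha.le (Set.mem_Ici.2 hb.le)
      ha.ne' hb.ne' hab
  rwa [div_lt_div_iff₀ ha hb, mul_comm (f b)] at hslope

theorem Finset.sum_mul_sum_lt_sum_mul_sum {ι κ R : Type*} [NonUnitalNonAssocSemiring R]
    [PartialOrder R] [IsOrderedCancelAddMonoid R] {s : Finset ι} {t : Finset κ}
    (hs : s.Nonempty) (ht : t.Nonempty) {a b : ι → R} {c d : κ → R}
    (h : ∀ i ∈ s, ∀ j ∈ t, a i * c j < b i * d j) :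
    (∑ i ∈ s, a i) * (∑ j ∈ t, c j) < (∑ i ∈ s, b i) * (∑ j ∈ t, d j) := by
  rw [sum_mul_sum, sum_mul_sum]
  exact sum_lt_sum_of_nonempty hs fun i hi => sum_lt_sum_of_nonempty ht fun j hj => h i hi j hj

theorem div_add_lt_div_add_iff {a b c d : ℝ} (hab : 0 < a + b) (hcd : 0 < c + d) :
    a / (a + b) < c / (c + d) ↔ a * d < c * b := by
  rw [div_lt_div_iff₀ hab hcd]
  constructor <;> intro h <;> linarith

/-- Convex Sampling: Unsafe cluster frequencies `u : Fin p → ℝ`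
and safe cluster frequencies `s : Fin q → ℝ`, all positive, with `p, q ≥ 1`
and the all-pairs majority assumption `u i < s j`.  For a strictly convex
warping function `f` on `[0,∞)` with `f 0 = 0` and `f > 0` on `(0,∞)`, the
unsafe mass of the `f`-warped renormalized sampling distribution is strictly
smaller than the raw unsafe fraction. -/
theorem convex_sampling_decreases_unsafe_mass
    (p q : ℕ) (hp : 1 ≤ p) (hq : 1 ≤ q)
    (u : Fin p → ℝ) (s : Fin q → ℝ)
    (hu : ∀ i, 0 < u i) (hs : ∀ j, 0 < s j)
    (hmaj : ∀ i j, u i < s j)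
    (f : ℝ → ℝ) (hf : StrictConvexOn ℝ (Set.Ici (0 : ℝ)) f)
    (hf0 : f 0 = 0) (hfpos : ∀ x : ℝ, 0 < x → 0 < f x) :
    (∑ i, f (u i)) / ((∑ i, f (u i)) + (∑ j, f (s j)))
      < (∑ i, u i) / ((∑ i, u i) + (∑ j, s j)) := by
  have hP : (univ : Finset (Fin p)).Nonempty := ⟨⟨0, hp⟩, mem_univ _⟩
  have hQ : (univ : Finset (Fin q)).Nonempty := ⟨⟨0, hq⟩, mem_univ _⟩
  have hfu : 0 < ∑ i, f (u i) := sum_pos (fun i _ => hfpos _ (hu i)) hP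
  have hfs : 0 < ∑ j, f (s j) := sum_pos (fun j _ => hfpos _ (hs j)) hQ
  have hsu : 0 < ∑ i, u i := sum_pos (fun i _ => hu i) hP
  have hss : 0 < ∑ j, s j := sum_pos (fun j _ => hs j) hQ
  rw [div_add_lt_div_add_iff (by linarith) (by linarith)]
  exact sum_mul_sum_lt_sum_mul_sum hP hQ fun i _ j _ =>
    hf.mul_lt_mul_of_lt hf0 (hu i) (hmaj i j)
end

section
/- Let u_1, …, u_p > 0 be the frequencies of the unsafe clusters and s_1, …, s_q > 0 the frequencies of the safe clusters, with p ≥ 1, q ≥ 1, and u_i < s_j for every i and j. Let f : ℝ → ℝ be twice differentiable on (0,∞) and continuous on [0,∞) with f(0) = 0, f''(x) > 0 for all x > 0, and f(x) > 0 for all x > 0. Then (Σ_i f(u_i)) / (Σ_i f(u_i) + Σ_j f(s_j)) < (Σ_i u_i) / (Σ_i u_i + Σ_j s_j). -/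
/-- Convex Sampling, second-derivative form: Unsafe cluster
frequencies `u : Fin p → ℝ` and safe cluster frequencies `s : Fin q → ℝ`, all
positive, with `p, q ≥ 1` and the all-pairs majority assumption `u i < s j`.
For a warping function `f` that is continuous on `[0,∞)`, twice differentiable
on `(0,∞)`, with `f 0 = 0`, `f'' > 0` on `(0,∞)` and `f > 0` on `(0,∞)`,
the unsafe mass of the `f`-warped renormalized sampling distribution is
strictly smaller than the raw unsafe fraction. -/
theorem convex_sampling_decreases_unsafe_mass_of_second_deriv_pos
    (p q : ℕ) (hp : 1 ≤ p) (hq : 1 ≤ q)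
    (u : Fin p → ℝ) (s : Fin q → ℝ)
    (hu : ∀ i, 0 < u i) (hs : ∀ j, 0 < s j)
    (hmaj : ∀ i j, u i < s j)
    (f : ℝ → ℝ)
    (hfc : ContinuousOn f (Set.Ici (0 : ℝ)))
    (hfd : DifferentiableOn ℝ f (Set.Ioi (0 : ℝ)))
    (hfd2 : DifferentiableOn ℝ (deriv f) (Set.Ioi (0 : ℝ)))
    (hf0 : f 0 = 0)
    (hf'' : ∀ x ∈ Set.Ioi (0 : ℝ), 0 < deriv (deriv f) x)
    (hfpos : ∀ x : ℝ, 0 < x → 0 < f x) :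
    (∑ i, f (u i)) / ((∑ i, f (u i)) + (∑ j, f (s j)))
      < (∑ i, u i) / ((∑ i, u i) + (∑ j, s j)) := by
  -- strict convexity from f'' > 0
  have hconv : StrictConvexOn ℝ (Set.Ici (0:ℝ)) f := by
    apply strictConvexOn_of_deriv2_pos (convex_Ici 0) hfc
    intro x hx
    rw [interior_Ici] at hx
    simpa [Function.iterate_succ, Function.comp] using hf'' x hx
  -- pairwise inequality: f a * b < a * f b for 0 < a < b
  have key : ∀ a b : ℝ, 0 < a → a < b → f a * b < a * f b := by
    intro a b ha hab
    have hb : 0 < b := ha.trans hab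
    have ht0 : 0 < a / b := div_pos ha hb
    have ht1 : a / b < 1 := (div_lt_one hb).2 hab
    have := hconv.2 (Set.self_mem_Ici) (le_of_lt hb : (0:ℝ) ≤ b)
      (by positivity : (0:ℝ) ≠ b) (by linarith : (0:ℝ) < 1 - a/b) ht0 (by ring)
    simp only [smul_eq_mul, mul_zero, zero_add, hf0] at this
    have h2 : f a < a / b * f b := by
      rwa [div_mul_cancel₀ _ (ne_of_gt hb)] at this
    calc f a * b < (a / b * f b) * b := by nlinarith
      _ = a * f b := by field_simp
  set A := ∑ i, f (u i) with hA
  set B := ∑ j, f (s j) with hB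
  set C := ∑ i, u i with hC
  set D := ∑ j, s j with hD
  have hApos : 0 < A := Finset.sum_pos (fun i _ => hfpos _ (hu i))
    (Finset.univ_nonempty_iff.2 ⟨⟨0, hp⟩⟩)
  have hBpos : 0 < B := Finset.sum_pos (fun j _ => hfpos _ (hs j))
    (Finset.univ_nonempty_iff.2 ⟨⟨0, hq⟩⟩)
  have hCpos : 0 < C := Finset.sum_pos (fun i _ => hu i)
    (Finset.univ_nonempty_iff.2 ⟨⟨0, hp⟩⟩)
  have hDpos : 0 < D := Finset.sum_pos (fun j _ => hs j)
    (Finset.univ_nonempty_iff.2 ⟨⟨0, hq⟩⟩)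
  have hcross : A * D < C * B := by
    have : ∑ i, ∑ j, f (u i) * s j < ∑ i, ∑ j, u i * f (s j) := by
      apply Finset.sum_lt_sum_of_nonempty (Finset.univ_nonempty_iff.2 ⟨⟨0, hp⟩⟩)
      intro i _
      apply Finset.sum_lt_sum_of_nonempty (Finset.univ_nonempty_iff.2 ⟨⟨0, hq⟩⟩)
      intro j _
      exact key _ _ (hu i) (hmaj i j)
    calc A * D = ∑ i, ∑ j, f (u i) * s j := by
          rw [hA, hD, Finset.sum_mul_sum]
      _ < ∑ i, ∑ j, u i * f (s j) := this
      _ = C * B := by rw [hC, hB, Finset.sum_mul_sum]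
  rw [div_lt_div_iff₀ (by linarith) (by linarith)]
  nlinarith
end

section
/- Let u_1, …, u_p > 0 be the frequencies of the unsafe clusters and s_1, …, s_q > 0 the frequencies of the safe clusters, with p ≥ 1, q ≥ 1, and u_i < s_j for every i and j. Then for every real exponent r > 1, (Σ_i u_i^r) / (Σ_i u_i^r + Σ_j s_j^r) < (Σ_i u_i) / (Σ_i u_i + Σ_j s_j). -/
/-- Convex Sampling with power warping: Unsafe cluster
frequencies `u : Fin p → ℝ` and safe cluster frequencies `s : Fin q → ℝ`, all
positive, with `p, q ≥ 1` and the all-pairs majority assumption `u i < s j`.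
For every real exponent `r > 1`, warping with `x ↦ x^r` and renormalizing
strictly decreases the unsafe mass below the raw unsafe fraction. -/
theorem power_warping_decreases_unsafe_mass
    (p q : ℕ) (hp : 1 ≤ p) (hq : 1 ≤ q)
    (u : Fin p → ℝ) (s : Fin q → ℝ)
    (hu : ∀ i, 0 < u i) (hs : ∀ j, 0 < s j)
    (hmaj : ∀ i j, u i < s j)
    (r : ℝ) (hr : 1 < r) :
    (∑ i, u i ^ r) / ((∑ i, u i ^ r) + (∑ j, s j ^ r))
      < (∑ i, u i) / ((∑ i, u i) + (∑ j, s j)) := by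
  haveI : NeZero p := ⟨by omega⟩
  haveI : NeZero q := ⟨by omega⟩
  have hne : (Finset.univ : Finset (Fin p)).Nonempty := Finset.univ_nonempty
  have hneq : (Finset.univ : Finset (Fin q)).Nonempty := Finset.univ_nonempty
  have hU : 0 < ∑ i, u i := Finset.sum_pos (fun i _ => hu i) hne
  have hS : 0 < ∑ j, s j := Finset.sum_pos (fun j _ => hs j) hneq
  have hUr : 0 < ∑ i, u i ^ r :=
    Finset.sum_pos (fun i _ => Real.rpow_pos_of_pos (hu i) r) hne
  have hSr : 0 < ∑ j, s j ^ r :=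
    Finset.sum_pos (fun j _ => Real.rpow_pos_of_pos (hs j) r) hneq
  have term : ∀ i j, u i ^ r * s j < u i * s j ^ r := by
    intro i j
    have h1 : u i ^ (r - 1) < s j ^ (r - 1) :=
      Real.rpow_lt_rpow (le_of_lt (hu i)) (hmaj i j) (by linarith)
    have hu' : u i ^ r = u i * u i ^ (r - 1) := by
      rw [← Real.rpow_one_add' (le_of_lt (hu i)) (by intro h; linarith)]
      ring_nf
    have hs' : s j ^ r = s j * s j ^ (r - 1) := by
      rw [← Real.rpow_one_add' (le_of_lt (hs j)) (by intro h; linarith)]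
      ring_nf
    rw [hu', hs']
    have := mul_pos (hu i) (hs j)
    nlinarith [Real.rpow_pos_of_pos (hu i) (r - 1), Real.rpow_pos_of_pos (hs j) (r - 1)]
  have key : (∑ i, u i ^ r) * (∑ j, s j) < (∑ i, u i) * (∑ j, s j ^ r) := by
    rw [Finset.sum_mul_sum, Finset.sum_mul_sum]
    refine Finset.sum_lt_sum_of_nonempty hne fun i _ =>
      Finset.sum_lt_sum_of_nonempty hneq fun j _ => term i j
  rw [div_lt_div_iff₀ (by linarith) (by linarith)]
  nlinarith
end

section
/- Let N : ι → ℝ be the cluster sizes over a finite index set ι partitioned into unsafe clusters I_u and safe clusters I_s, and suppose there exists a safe cluster j₀ ∈ I_s with N j₀ > N i for every unsafe cluster i ∈ I_u. Then the unsafe mass under softmax sampling with temperature τ, namely S(τ) = (Σ_{i ∈ I_u} exp(N i / τ)) / (Σ_{k ∈ ι} exp(N k / τ)), tends to 0 as τ → 0⁺. -/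
open Filter Real

/-- Cluster sizes `N : ι → ℝ` over a finite index set `ι`
partitioned into unsafe clusters `Iu` and safe clusters `Is`; assume some safe
cluster `j₀ ∈ Is` satisfies `N j₀ > N i` for all unsafe `i ∈ Iu`.  Then the
unsafe mass under softmax sampling with temperature `τ`,
`S τ = (∑_{i ∈ Iu} exp (N i / τ)) / (∑_k exp (N k / τ))`,
tends to `0` as `τ → 0⁺`. -/
theorem softmax_unsafe_mass_tendsto_zero
    {ι : Type*} [Fintype ι] [DecidableEq ι]
    (N : ι → ℝ) (Iu Is : Finset ι)
    (hdisj : Disjoint Iu Is) (hcover : Iu ∪ Is = Finset.univ)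
    (j₀ : ι) (hj₀ : j₀ ∈ Is) (hmax : ∀ i ∈ Iu, N i < N j₀) :
    Filter.Tendsto
      (fun τ : ℝ => (∑ i ∈ Iu, Real.exp (N i / τ)) / (∑ k : ι, Real.exp (N k / τ)))
      (nhdsWithin 0 (Set.Ioi (0 : ℝ))) (nhds 0) := by
  have hg : Tendsto (fun τ : ℝ => ∑ i ∈ Iu, Real.exp ((N i - N j₀) / τ))
      (nhdsWithin 0 (Set.Ioi (0 : ℝ))) (nhds 0) := by
    rw [show (nhds (0:ℝ)) = nhds (∑ _i ∈ Iu, (0:ℝ)) by simp]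
    apply tendsto_finset_sum
    intro i hi
    apply Real.tendsto_exp_atBot.comp
    have h1 : Tendsto (fun τ : ℝ => (N j₀ - N i) / τ)
        (nhdsWithin 0 (Set.Ioi (0 : ℝ))) atTop := by
      have : Tendsto (fun τ : ℝ => τ⁻¹) (nhdsWithin 0 (Set.Ioi (0 : ℝ))) atTop :=
        tendsto_inv_nhdsGT_zero
      have := this.const_mul_atTop (by linarith [hmax i hi] : (0:ℝ) < N j₀ - N i)
      simpa [div_eq_mul_inv] using this
    have h2 := tendsto_neg_atTop_atBot.comp h1
    have h3 : Tendsto (fun τ : ℝ => (N i - N j₀) / τ) (nhdsWithin 0 (Set.Ioi 0)) atBot := by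
      convert h2 using 1
      funext τ; simp [Function.comp]; ring
    exact h3
  apply squeeze_zero' ?_ ?_ hg
  · filter_upwards [self_mem_nhdsWithin] with τ hτ
    have hτ' : (0:ℝ) < τ := hτ
    apply div_nonneg (Finset.sum_nonneg fun i _ => (Real.exp_pos _).le)
    exact Finset.sum_nonneg fun k _ => (Real.exp_pos _).le
  · filter_upwards [self_mem_nhdsWithin] with τ hτ
    have hτ' : (0:ℝ) < τ := hτ
    have hden : Real.exp (N j₀ / τ) ≤ ∑ k : ι, Real.exp (N k / τ) :=
      Finset.single_le_sum (f := fun k => Real.exp (N k / τ))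
        (fun k _ => (Real.exp_pos _).le) (Finset.mem_univ j₀)
    calc (∑ i ∈ Iu, Real.exp (N i / τ)) / (∑ k : ι, Real.exp (N k / τ))
        ≤ (∑ i ∈ Iu, Real.exp (N i / τ)) / Real.exp (N j₀ / τ) := by
          apply div_le_div_of_nonneg_left
            (Finset.sum_nonneg fun i _ => (Real.exp_pos _).le) (Real.exp_pos _) hden
      _ = ∑ i ∈ Iu, Real.exp ((N i - N j₀) / τ) := by
          rw [Finset.sum_div]
          refine Finset.sum_congr rfl fun i _ => ?_
          rw [← Real.exp_sub, sub_div]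
end

section
/- Let u, s be cluster frequencies with 0 < u < s and u + s = 1, and let τ > 0. Then the unsafe mass under two-cluster softmax sampling with temperature τ satisfies exp(u/τ) / (exp(u/τ) + exp(s/τ)) < u if and only if τ < (s − u) / log(s/u). In particular, for τ ≥ (s − u)/log(s/u), softmax sampling does not decrease the unsafe fraction. -/
/-- Two clusters with frequencies `0 < u < s`, `u + s = 1`, and
temperature `τ > 0`.  The unsafe mass under two-cluster softmax sampling is
below the raw unsafe frequency `u` iff `τ < (s - u) / log (s / u)`; in
particular, for `τ ≥ (s - u) / log (s / u)` softmax sampling does not decrease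
the unsafe fraction. -/
theorem two_cluster_softmax_threshold
    (u s τ : ℝ) (hu : 0 < u) (hus : u < s) (hsum : u + s = 1) (hτ : 0 < τ) :
    (Real.exp (u / τ) / (Real.exp (u / τ) + Real.exp (s / τ)) < u ↔
      τ < (s - u) / Real.log (s / u)) ∧
    ((s - u) / Real.log (s / u) ≤ τ →
      u ≤ Real.exp (u / τ) / (Real.exp (u / τ) + Real.exp (s / τ))) := by
  have hs : 0 < s := lt_trans hu hus
  have hL : 0 < Real.log (s / u) := Real.log_pos (by rw [lt_div_iff₀ hu]; linarith)
  have hAB : 0 < Real.exp (u / τ) + Real.exp (s / τ) := by positivity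
  have key : Real.exp (u / τ) / (Real.exp (u / τ) + Real.exp (s / τ)) < u ↔
      τ < (s - u) / Real.log (s / u) := by
    rw [div_lt_iff₀ hAB, lt_div_iff₀ hL]
    have h1 : Real.exp (u / τ) < u * (Real.exp (u / τ) + Real.exp (s / τ)) ↔
        s * Real.exp (u / τ) < u * Real.exp (s / τ) := by
      have hA : s * Real.exp (u / τ) + u * Real.exp (u / τ) = Real.exp (u / τ) := by
        have : (s + u) * Real.exp (u / τ) = 1 * Real.exp (u / τ) := by
          rw [show s + u = 1 by linarith]
        linarith [this]
      constructor <;> intro h <;> linarith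
    rw [h1,
      show s * Real.exp (u / τ) = Real.exp (u / τ + Real.log s) by
        rw [Real.exp_add, Real.exp_log hs]; ring,
      show u * Real.exp (s / τ) = Real.exp (s / τ + Real.log u) by
        rw [Real.exp_add, Real.exp_log hu]; ring,
      Real.exp_lt_exp, Real.log_div (ne_of_gt hs) (ne_of_gt hu)]
    have e1 : τ * (u / τ) = u := by field_simp
    have e2 : τ * (s / τ) = s := by field_simp
    constructor
    · intro h
      have := (mul_lt_mul_iff_right₀ hτ).mpr h
      nlinarith
    · intro h
      have : u / τ + Real.log s < s / τ + Real.log u := by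
        rw [div_add' _ _ _ (ne_of_gt hτ), div_add' _ _ _ (ne_of_gt hτ),
          div_lt_div_iff₀ hτ hτ]
        nlinarith
      exact this
  refine ⟨key, fun h => ?_⟩
  by_contra hc
  push_neg at hc
  exact absurd (key.mp hc) (not_lt.mpr h)
end
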